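/- arXiv:1904.12565 — 2 statements merged into one kernel-verified Lean document; each statement's English description precedes it below -/
import Mathlib

section
/- Let g = 2 and let B be the positive definite symmetric bilinear form on ℝ² with matrix r₁·[[1,0],[0,1]] + r₂·[[0,0],[0,1]] + r₃·[[1,−1],[−1,1]], where r₁, r₂, r₃ > 0. Then the 2-dimensional Delaunay cells of B are exactly the ℤ²-translates of the two triangles σ₁ = conv{0, s₁, s₁+s₂} and σ₂ = conv{0, s₂, s₁+s₂}. -/
/-!
If `a` and `b` are lattice points nearest to a centre `α`, then `a + e` and `b - e` are no nearer
for any lattice vector `e`, and the parallelogram law turns this into `B(b - a) ≤ B(b - a - 2e)`.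
Here `B(x) = r₁ x₀² + (r₁ + r₂) x₁² + r₃ (x₀ - x₁)²` is a positive combination of the squares of
the forms `x₀`, `x₁`, `x₀ - x₁`, and `e = ⌊(b - a) / 2⌋` shows that each of these forms differs by
at most one between nearest points. So the nearest points lie in a lattice translate of
`{0, s₁, s₁ + s₂}` or `{0, s₂, s₁ + s₂}`, and fill it when they span the plane. Conversely, for the
`B`-circumcentre `c` of such a triangle, `B(y - c) - B(c)` is a positive combination of products
`t (t - 1)` of integers, which vanishes exactly at the three vertices.
-/

open Matrix Set

noncomputable section

/-- The standard lattice `ℤ^g` sitting inside `ℝ^g`. -/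
def latticePts (g : ℕ) : Set (Fin g → ℝ) :=
  Set.range (fun a : Fin g → ℤ => fun i => (a i : ℝ))

/-- `σ` is a (closed) Delaunay cell of the bilinear form `B`: there is an `α ∈ ℝ^g`
such that `σ` is the convex hull of the lattice points nearest to `α`
(with respect to the distance defined by `B`). -/
def IsDelaunayCell {g : ℕ} (B : (Fin g → ℝ) → (Fin g → ℝ) → ℝ)
    (σ : Set (Fin g → ℝ)) : Prop :=
  ∃ α : Fin g → ℝ, σ = convexHull ℝ
    {a | a ∈ latticePts g ∧ ∀ b ∈ latticePts g, B (a - α) (a - α) ≤ B (b - α) (b - α)}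

/-- `C(0,S)`: the cone generated by `S` over the nonnegative reals. -/
def cone0 {g : ℕ} (S : Set (Fin g → ℝ)) : Set (Fin g → ℝ) :=
  {x | ∃ r : ℝ, 0 ≤ r ∧ ∃ y ∈ convexHull ℝ S, x = r • y}

/-- `Semi(0, S ∩ ℤ^g)`: the additive submonoid generated by the lattice points of `S`. -/
def semi0 {g : ℕ} (S : Set (Fin g → ℝ)) : Set (Fin g → ℝ) :=
  (AddSubmonoid.closure (S ∩ latticePts g) : AddSubmonoid (Fin g → ℝ))

/-- The standard basis vector `s_i` of `ℝ^g`. -/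
def stdV (g : ℕ) (i : Fin g) : Fin g → ℝ := Pi.single i 1

/-- Translation of a subset of `ℝ^g` by a lattice vector `v ∈ ℤ^g`. -/
def zTrans {g : ℕ} (v : Fin g → ℤ) (S : Set (Fin g → ℝ)) : Set (Fin g → ℝ) :=
  (fun x => (fun i => (v i : ℝ)) + x) '' S

def latticeVec (g : ℕ) : (Fin g → ℤ) →+ (Fin g → ℝ) := (Int.castAddHom ℝ).compLeft (Fin g)

@[simp]
lemma latticeVec_apply {g : ℕ} (a : Fin g → ℤ) (i : Fin g) : latticeVec g a i = a i := rfl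

lemma mem_latticePts {g : ℕ} {x : Fin g → ℝ} : x ∈ latticePts g ↔ ∃ a, latticeVec g a = x :=
  Iff.rfl

lemma latticeVec_mem_latticePts {g : ℕ} (a : Fin g → ℤ) : latticeVec g a ∈ latticePts g :=
  ⟨a, rfl⟩

lemma add_mem_latticePts {g : ℕ} {x y : Fin g → ℝ} (hx : x ∈ latticePts g)
    (hy : y ∈ latticePts g) : x + y ∈ latticePts g := by
  obtain ⟨a, rfl⟩ := hx
  obtain ⟨b, rfl⟩ := hy
  exact ⟨a + b, map_add (latticeVec g) a b⟩

lemma sub_mem_latticePts {g : ℕ} {x y : Fin g → ℝ} (hx : x ∈ latticePts g)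
    (hy : y ∈ latticePts g) : x - y ∈ latticePts g := by
  obtain ⟨a, rfl⟩ := hx
  obtain ⟨b, rfl⟩ := hy
  exact ⟨a - b, map_sub (latticeVec g) a b⟩

lemma latticeVec_single {g : ℕ} (i : Fin g) : latticeVec g (Pi.single i 1) = stdV g i := by
  ext j
  simp [stdV, Pi.single_apply, apply_ite]

open scoped Pointwise in
lemma convexHull_zTrans {g : ℕ} (v : Fin g → ℤ) (S : Set (Fin g → ℝ)) :
    convexHull ℝ (zTrans v S) = zTrans v (convexHull ℝ S) :=
  convexHull_vadd (latticeVec g v) S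

def nearestLatticePts {g : ℕ} (q : (Fin g → ℝ) → ℝ) (α : Fin g → ℝ) : Set (Fin g → ℝ) :=
  {a | a ∈ latticePts g ∧ ∀ b ∈ latticePts g, q (a - α) ≤ q (b - α)}

lemma isDelaunayCell_iff {g : ℕ} {B : (Fin g → ℝ) → (Fin g → ℝ) → ℝ} {σ : Set (Fin g → ℝ)} :
    IsDelaunayCell B σ ↔ ∃ α, σ = convexHull ℝ (nearestLatticePts (fun x => B x x) α) :=
  Iff.rfl

lemma nearestLatticePts_add_latticeVec {g : ℕ} (q : (Fin g → ℝ) → ℝ) (v : Fin g → ℤ)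
    (α : Fin g → ℝ) :
    nearestLatticePts q (latticeVec g v + α) = zTrans v (nearestLatticePts q α) := by
  have hv := latticeVec_mem_latticePts v
  ext x
  constructor
  · rintro ⟨hx, hmin⟩
    refine ⟨x - latticeVec g v, ⟨sub_mem_latticePts hx hv, fun b hb => ?_⟩, add_sub_cancel _ _⟩
    simpa only [sub_sub, add_sub_add_left_eq_sub] using hmin _ (add_mem_latticePts hv hb)
  · rintro ⟨y, ⟨hy, hmin⟩, rfl⟩
    change latticeVec g v + y ∈ _
    refine ⟨add_mem_latticePts hv hy, fun b hb => ?_⟩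
    simpa only [add_sub_add_left_eq_sub, sub_sub, add_sub_cancel] using
      hmin _ (sub_mem_latticePts hb hv)

lemma QuadraticMap.apply_add_add_apply_sub {V : Type*} [AddCommGroup V] [Module ℝ V]
    (Q : QuadraticMap ℝ V ℝ) (x y e : V) :
    Q (x + e) + Q (y - e) = Q x + Q y + (Q (y - x - (2 : ℝ) • e) - Q (y - x)) / 2 := by
  simp only [← QuadraticMap.associated_eq_self_apply ℝ, map_add, map_sub, map_smul,
    LinearMap.add_apply, LinearMap.sub_apply, LinearMap.smul_apply, smul_eq_mul]
  rw [QuadraticMap.associated_isSymm ℝ Q e x, QuadraticMap.associated_isSymm ℝ Q e y,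
    QuadraticMap.associated_isSymm ℝ Q y x]
  ring

lemma apply_sub_le_of_mem_nearestLatticePts {g : ℕ} (Q : QuadraticMap ℝ (Fin g → ℝ) ℝ)
    {α a b e : Fin g → ℝ} (ha : a ∈ nearestLatticePts Q α) (hb : b ∈ nearestLatticePts Q α)
    (he : e ∈ latticePts g) : Q (b - a) ≤ Q (b - a - (2 : ℝ) • e) := by
  have hae := ha.2 _ (add_mem_latticePts ha.1 he)
  have hbe := hb.2 _ (sub_mem_latticePts hb.1 he)
  have hpar := Q.apply_add_add_apply_sub (a - α) (b - α) e
  rw [sub_sub_sub_cancel_right] at hpar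
  rw [add_sub_right_comm] at hae
  rw [sub_right_comm] at hbe
  linarith

lemma affineSpan_eq_top_iff_not_collinear {k V : Type*} [Field k] [AddCommGroup V] [Module k V]
    [FiniteDimensional k V] (hV : Module.finrank k V = 2) {s : Set V} :
    affineSpan k s = ⊤ ↔ ¬Collinear k s := by
  have : Nontrivial V := Module.nontrivial_of_finrank_eq_succ hV
  rw [AffineSubspace.affineSpan_eq_top_iff_vectorSpan_eq_top_of_nontrivial,
    collinear_iff_finrank_le_one, Submodule.eq_top_iff_finrank_eq, hV]
  have := (vectorSpan k s).finrank_le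
  omega

lemma eq_of_subset_triple_of_not_collinear {k V : Type*} [Field k] [AddCommGroup V] [Module k V]
    {s : Set V} {a b c : V} (hs : s ⊆ {a, b, c}) (h : ¬Collinear k s) : s = {a, b, c} := by
  have hpair : ∀ {x y z : V}, s ⊆ {x, y, z} → x ∉ s → Collinear k s := fun hs hx =>
    (collinear_pair k _ _).subset fun w hw =>
      (hs hw).resolve_left (by rintro rfl; exact hx hw)
  refine hs.antisymm (insert_subset_iff.2 ⟨?_, insert_subset_iff.2 ⟨?_, singleton_subset_iff.2 ?_⟩⟩)
  · exact not_not.1 fun ha => h (hpair hs ha)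
  · refine not_not.1 fun hb => h (hpair (y := a) (z := c) ?_ hb)
    exact hs.trans (by simp [insert_subset_iff])
  · refine not_not.1 fun hc => h (hpair (y := a) (z := b) ?_ hc)
    exact hs.trans (by simp [insert_subset_iff])

def triangleVerts (i : Fin 2) : Set (Fin 2 → ℝ) := {0, stdV 2 i, stdV 2 0 + stdV 2 1}

lemma zTrans_triangleVerts (v : Fin 2 → ℤ) (i : Fin 2) :
    zTrans v (triangleVerts i) =
      {latticeVec 2 v, latticeVec 2 v + stdV 2 i, latticeVec 2 v + (stdV 2 0 + stdV 2 1)} := by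
  simp only [zTrans, triangleVerts, image_insert_eq, image_singleton, add_zero]
  rfl

lemma not_collinear_zTrans_triangleVerts (v : Fin 2 → ℤ) (i : Fin 2) :
    ¬Collinear ℝ (zTrans v (triangleVerts i)) := by
  rw [zTrans_triangleVerts, collinear_iff_of_mem (mem_insert _ _)]
  rintro ⟨u, hu⟩
  obtain ⟨r, hr⟩ := hu _ (mem_insert_of_mem _ (mem_insert _ _))
  obtain ⟨s, hs⟩ := hu _ (mem_insert_of_mem _ (mem_insert_of_mem _ (mem_singleton _)))
  rw [vadd_eq_add, add_comm, add_left_inj] at hr hs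
  have hr0 := congrFun hr 0
  have hr1 := congrFun hr 1
  have hs0 := congrFun hs 0
  have hs1 := congrFun hs 1
  fin_cases i <;>
    simp only [stdV, Fin.zero_eta, Fin.mk_one, Fin.isValue, Pi.single_eq_same, Pi.single_eq_of_ne,
      ne_eq, one_ne_zero, zero_ne_one, not_false_eq_true, Pi.smul_apply, smul_eq_mul, zero_eq_mul,
      Pi.add_apply, add_zero, zero_add] at hr0 hr1 hs0 hs1
  · rcases hr1 with h | h <;> simp [h] at hr0 hs1
  · rcases hr0 with h | h <;> simp [h] at hr1 hs0

lemma sq_sub_two_mul_le_sq {s t : ℤ} (h : |s - 2 * t| ≤ 1) : (s - 2 * t) ^ 2 ≤ s ^ 2 := by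
  rcases eq_or_ne (s - 2 * t) 0 with h₀ | h₀
  · rw [h₀]
    positivity
  · have hs : s ≠ 0 := by
      have := abs_le.1 h
      omega
    calc (s - 2 * t) ^ 2 ≤ 1 := (sq_le_one_iff_abs_le_one _).2 h
      _ ≤ s ^ 2 := (one_le_sq_iff_one_le_abs s).2 (Int.one_le_abs hs)

lemma mul_sub_nonneg_of_abs_le_one {t ε : ℤ} (hε : |ε| ≤ 1) : 0 ≤ t * (t - ε) := by
  rw [abs_le] at hε
  rcases (by omega : (t ≤ 0 ∧ t - ε ≤ 0) ∨ (0 ≤ t ∧ 0 ≤ t - ε)) with ⟨h, h'⟩ | ⟨h, h'⟩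
  · exact mul_nonneg_of_nonpos_of_nonpos h h'
  · exact mul_nonneg h h'

lemma mul_sub_nonpos_iff {t ε : ℤ} (hε : |ε| ≤ 1) : t * (t - ε) ≤ 0 ↔ t = 0 ∨ t = ε := by
  rw [← sub_eq_zero (b := ε), ← mul_eq_zero]
  exact ⟨fun h => le_antisymm h (mul_sub_nonneg_of_abs_le_one hε), le_of_eq⟩

lemma nonpos_of_weighted_sum_nonpos {w₁ w₂ w₃ a₁ a₂ a₃ : ℝ} (hw₁ : 0 < w₁) (hw₂ : 0 < w₂)
    (hw₃ : 0 < w₃) (ha₁ : 0 ≤ a₁) (ha₂ : 0 ≤ a₂) (ha₃ : 0 ≤ a₃)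
    (h : w₁ * a₁ + w₂ * a₂ + w₃ * a₃ ≤ 0) : a₁ ≤ 0 ∧ a₂ ≤ 0 ∧ a₃ ≤ 0 := by
  have := mul_nonneg hw₁.le ha₁
  have := mul_nonneg hw₂.le ha₂
  have := mul_nonneg hw₃.le ha₃
  refine ⟨nonpos_of_mul_nonpos_right ?_ hw₁, nonpos_of_mul_nonpos_right ?_ hw₂,
    nonpos_of_mul_nonpos_right ?_ hw₃⟩ <;> linarith

lemma exists_forall_eq_or_eq_add_one {S : Set ℤ} (h : ∀ x ∈ S, ∀ y ∈ S, |x - y| ≤ 1) :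
    ∃ k, ∀ x ∈ S, x = k ∨ x = k + 1 := by
  by_cases hpred : ∃ x ∈ S, x - 1 ∈ S
  · obtain ⟨x, hx, hx'⟩ := hpred
    refine ⟨x - 1, fun z hz => ?_⟩
    have := abs_le.1 (h z hz x hx)
    have := abs_le.1 (h z hz _ hx')
    omega
  · simp only [not_exists, not_and] at hpred
    rcases S.eq_empty_or_nonempty with rfl | ⟨x, hx⟩
    · exact ⟨0, fun _ => False.elim⟩
    · refine ⟨x, fun z hz => ?_⟩
      have := abs_le.1 (h z hz x hx)
      have : z ≠ x - 1 := by rintro rfl; exact hpred x hx hz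
      omega

def dicingForm (w₁ w₂ w₃ : ℝ) : QuadraticForm ℝ (Fin 2 → ℝ) :=
  Matrix.toQuadraticForm' !![w₁ + w₃, -w₃; -w₃, w₂ + w₃]

lemma dicingForm_apply (w₁ w₂ w₃ : ℝ) (x : Fin 2 → ℝ) :
    dicingForm w₁ w₂ w₃ x = w₁ * x 0 ^ 2 + w₂ * x 1 ^ 2 + w₃ * (x 0 - x 1) ^ 2 := by
  rw [dicingForm, toQuadraticForm', LinearMap.BilinMap.toQuadraticMap_apply,
    toLinearMap₂'_apply']
  simp only [dotProduct, mulVec, Fin.sum_univ_two, of_apply, cons_val', cons_val_zero,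
    cons_val_one, cons_val_fin_one]
  ring

lemma dotProduct_mulVec_eq_dicingForm (r₁ r₂ r₃ : ℝ) (x : Fin 2 → ℝ) :
    x ⬝ᵥ ((r₁ • !![(1:ℝ), 0; 0, 1] + r₂ • !![(0:ℝ), 0; 0, 1]
      + r₃ • !![(1:ℝ), -1; -1, 1]).mulVec x) = dicingForm r₁ (r₁ + r₂) r₃ x := by
  have hM : r₁ • !![(1:ℝ), 0; 0, 1] + r₂ • !![(0:ℝ), 0; 0, 1] + r₃ • !![(1:ℝ), -1; -1, 1] =
      !![r₁ + r₃, -r₃; -r₃, r₁ + r₂ + r₃] := by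
    ext i j
    fin_cases i <;> fin_cases j <;> simp
  rw [hM, dicingForm, toQuadraticForm', LinearMap.BilinMap.toQuadraticMap_apply,
    toLinearMap₂'_apply']

lemma abs_le_one_of_forall_dicingForm_le {w₁ w₂ w₃ : ℝ} (hw₁ : 0 < w₁) (hw₂ : 0 < w₂)
    (hw₃ : 0 < w₃) (d : Fin 2 → ℤ)
    (hd : ∀ e : Fin 2 → ℤ, dicingForm w₁ w₂ w₃ (latticeVec 2 d) ≤
      dicingForm w₁ w₂ w₃ (latticeVec 2 d - (2 : ℝ) • latticeVec 2 e)) :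
    |d 0| ≤ 1 ∧ |d 1| ≤ 1 ∧ |d 0 - d 1| ≤ 1 := by
  -- the three forms take values in `[-1, 1]` at `d - 2e`, so none of their squares grows
  set e : Fin 2 → ℤ := fun i => d i / 2
  have h₀ : |d 0 - 2 * e 0| ≤ 1 := by rw [abs_le]; simp only [e]; omega
  have h₁ : |d 1 - 2 * e 1| ≤ 1 := by rw [abs_le]; simp only [e]; omega
  have h₂ : |(d 0 - d 1) - 2 * (e 0 - e 1)| ≤ 1 := by rw [abs_le]; simp only [e]; omega
  have key := hd e
  simp only [dicingForm_apply, Pi.sub_apply, Pi.smul_apply, latticeVec_apply, smul_eq_mul] at key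
  have hsum : w₁ * ((d 0 ^ 2 - (d 0 - 2 * e 0) ^ 2 : ℤ) : ℝ)
      + w₂ * ((d 1 ^ 2 - (d 1 - 2 * e 1) ^ 2 : ℤ) : ℝ)
      + w₃ * (((d 0 - d 1) ^ 2 - ((d 0 - d 1) - 2 * (e 0 - e 1)) ^ 2 : ℤ) : ℝ) ≤ 0 := by
    push_cast
    linear_combination key
  have hnonneg : ∀ {s t : ℤ}, |s - 2 * t| ≤ 1 → (0 : ℝ) ≤ ((s ^ 2 - (s - 2 * t) ^ 2 : ℤ) : ℝ) :=
    fun h => by exact_mod_cast sub_nonneg.2 (sq_sub_two_mul_le_sq h)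
  have habs : ∀ {s t : ℤ}, |s - 2 * t| ≤ 1 → ((s ^ 2 - (s - 2 * t) ^ 2 : ℤ) : ℝ) ≤ 0 → |s| ≤ 1 :=
    fun h h' => (sq_le_sq.1 (sub_nonpos.1 (by exact_mod_cast h'))).trans h
  obtain ⟨a₀, a₁, a₂⟩ := nonpos_of_weighted_sum_nonpos hw₁ hw₂ hw₃ (hnonneg h₀) (hnonneg h₁)
    (hnonneg h₂) hsum
  exact ⟨habs h₀ a₀, habs h₁ a₁, habs h₂ a₂⟩

/-- `ε = 1` and `ε = -1` give the vertices of the two triangles, `ε = 0` the diagonal edge. -/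
def intTriangle (ε : ℤ) : Set (Fin 2 → ℤ) :=
  {y | (y 0 = 0 ∨ y 0 = 1) ∧ (y 1 = 0 ∨ y 1 = 1) ∧ (y 0 - y 1 = 0 ∨ y 0 - y 1 = ε)}

lemma exists_forall_sub_mem_intTriangle {S : Set (Fin 2 → ℤ)}
    (h : ∀ a ∈ S, ∀ b ∈ S, |(a - b) 0| ≤ 1 ∧ |(a - b) 1| ≤ 1 ∧ |(a - b) 0 - (a - b) 1| ≤ 1) :
    ∃ v : Fin 2 → ℤ, ∃ ε : ℤ, (ε = 1 ∨ ε = -1) ∧ ∀ a ∈ S, a - v ∈ intTriangle ε := by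
  -- each of `a 0`, `a 1`, `a 0 - a 1` takes two consecutive values on `S`; the window of
  -- `a 0 - a 1` cuts one corner off the unit square of the first two
  obtain ⟨k, hk⟩ := exists_forall_eq_or_eq_add_one (S := (· 0) '' S) <| by
    rintro _ ⟨a, ha, rfl⟩ _ ⟨b, hb, rfl⟩; exact (h a ha b hb).1
  obtain ⟨l, hl⟩ := exists_forall_eq_or_eq_add_one (S := (· 1) '' S) <| by
    rintro _ ⟨a, ha, rfl⟩ _ ⟨b, hb, rfl⟩; exact (h a ha b hb).2.1
  obtain ⟨j, hj⟩ := exists_forall_eq_or_eq_add_one (S := (fun a => a 0 - a 1) '' S) <| by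
    rintro _ ⟨a, ha, rfl⟩ _ ⟨b, hb, rfl⟩; simpa [sub_sub_sub_comm] using (h a ha b hb).2.2
  refine ⟨![k, l], if k - l ≤ j then 1 else -1, by split_ifs <;> simp, fun a ha => ?_⟩
  have hk' := hk _ (mem_image_of_mem _ ha)
  have hl' := hl _ (mem_image_of_mem _ ha)
  have hj' := hj _ (mem_image_of_mem _ ha)
  simp only [intTriangle, mem_ofPred_eq, Pi.sub_apply, cons_val_zero, cons_val_one]
  split_ifs <;> omega

lemma image_intTriangle_one : latticeVec 2 '' intTriangle 1 = triangleVerts 0 := by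
  have : intTriangle 1 = {0, Pi.single 0 1, Pi.single 0 1 + Pi.single 1 1} := by
    ext y
    simp only [intTriangle, mem_ofPred_eq, mem_insert_iff, mem_singleton_iff, funext_iff,
      Fin.forall_fin_two, Fin.isValue, Pi.zero_apply, Pi.add_apply, Pi.single_eq_same,
      Pi.single_eq_of_ne, ne_eq, one_ne_zero, zero_ne_one, not_false_eq_true, add_zero, zero_add]
    omega
  rw [this, image_insert_eq, image_insert_eq, image_singleton, map_zero, map_add,
    latticeVec_single, latticeVec_single, triangleVerts]

lemma image_intTriangle_neg_one : latticeVec 2 '' intTriangle (-1) = triangleVerts 1 := by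
  have : intTriangle (-1) = {0, Pi.single 1 1, Pi.single 0 1 + Pi.single 1 1} := by
    ext y
    simp only [intTriangle, mem_ofPred_eq, mem_insert_iff, mem_singleton_iff, funext_iff,
      Fin.forall_fin_two, Fin.isValue, Pi.zero_apply, Pi.add_apply, Pi.single_eq_same,
      Pi.single_eq_of_ne, ne_eq, one_ne_zero, zero_ne_one, not_false_eq_true, add_zero, zero_add]
    omega
  rw [this, image_insert_eq, image_insert_eq, image_singleton, map_zero, map_add,
    latticeVec_single, latticeVec_single, triangleVerts]

/-- The solution `c` of `2 B(c, s₁) = w₁ + ε w₃`, `2 B(c, s₂) = w₂ - ε w₃` for the polar form `B`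
of `dicingForm w₁ w₂ w₃`; the determinant of this system is `w₁ w₂ + w₁ w₃ + w₂ w₃`. -/
def dicingCircumcenter (w₁ w₂ w₃ ε : ℝ) : Fin 2 → ℝ :=
  ![1 / 2 + ε * w₂ * w₃ / (2 * (w₁ * w₂ + w₁ * w₃ + w₂ * w₃)),
    1 / 2 - ε * w₁ * w₃ / (2 * (w₁ * w₂ + w₁ * w₃ + w₂ * w₃))]

def dicingExcess (w₁ w₂ w₃ : ℝ) (ε : ℤ) (y : Fin 2 → ℤ) : ℝ :=
  w₁ * ((y 0 * (y 0 - 1) : ℤ) : ℝ) + w₂ * ((y 1 * (y 1 - 1) : ℤ) : ℝ)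
    + w₃ * (((y 0 - y 1) * (y 0 - y 1 - ε) : ℤ) : ℝ)

lemma dicingForm_latticeVec_sub_dicingCircumcenter {w₁ w₂ w₃ : ℝ}
    (hw : w₁ * w₂ + w₁ * w₃ + w₂ * w₃ ≠ 0) (ε : ℤ) (y : Fin 2 → ℤ) :
    dicingForm w₁ w₂ w₃ (latticeVec 2 y - dicingCircumcenter w₁ w₂ w₃ ε) =
      dicingForm w₁ w₂ w₃ (dicingCircumcenter w₁ w₂ w₃ ε) + dicingExcess w₁ w₂ w₃ ε y := by
  set c := dicingCircumcenter w₁ w₂ w₃ ε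
  have hD := mul_inv_cancel₀ hw
  have h₀ : 2 * (w₁ * c 0 + w₃ * (c 0 - c 1)) = w₁ + ε * w₃ := by
    simp only [c, dicingCircumcenter, cons_val_zero, cons_val_one, div_eq_mul_inv, mul_inv]
    linear_combination (ε * w₃) * hD
  have h₁ : 2 * (w₂ * c 1 - w₃ * (c 0 - c 1)) = w₂ - ε * w₃ := by
    simp only [c, dicingCircumcenter, cons_val_zero, cons_val_one, div_eq_mul_inv, mul_inv]
    linear_combination (-(ε * w₃)) * hD
  simp only [dicingForm_apply, dicingExcess, Pi.sub_apply, latticeVec_apply]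
  push_cast
  linear_combination (-(y 0 : ℝ)) * h₀ + (-(y 1 : ℝ)) * h₁

lemma dicingExcess_nonneg {w₁ w₂ w₃ : ℝ} (hw₁ : 0 ≤ w₁) (hw₂ : 0 ≤ w₂) (hw₃ : 0 ≤ w₃) {ε : ℤ}
    (hε : |ε| ≤ 1) (y : Fin 2 → ℤ) : 0 ≤ dicingExcess w₁ w₂ w₃ ε y := by
  have h₀ : (0 : ℝ) ≤ ((y 0 * (y 0 - 1) : ℤ) : ℝ) := by
    exact_mod_cast mul_sub_nonneg_of_abs_le_one (by norm_num)
  have h₁ : (0 : ℝ) ≤ ((y 1 * (y 1 - 1) : ℤ) : ℝ) := by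
    exact_mod_cast mul_sub_nonneg_of_abs_le_one (by norm_num)
  have h₂ : (0 : ℝ) ≤ (((y 0 - y 1) * (y 0 - y 1 - ε) : ℤ) : ℝ) := by
    exact_mod_cast mul_sub_nonneg_of_abs_le_one hε
  unfold dicingExcess
  positivity

lemma dicingExcess_nonpos_iff {w₁ w₂ w₃ : ℝ} (hw₁ : 0 < w₁) (hw₂ : 0 < w₂) (hw₃ : 0 < w₃)
    {ε : ℤ} (hε : |ε| ≤ 1) (y : Fin 2 → ℤ) :
    dicingExcess w₁ w₂ w₃ ε y ≤ 0 ↔ y ∈ intTriangle ε := by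
  have hone : |(1 : ℤ)| ≤ 1 := by norm_num
  simp only [intTriangle, mem_ofPred_eq, ← mul_sub_nonpos_iff hone, ← mul_sub_nonpos_iff hε]
  constructor
  · intro h
    obtain ⟨h₀, h₁, h₂⟩ := nonpos_of_weighted_sum_nonpos hw₁ hw₂ hw₃
      (by exact_mod_cast mul_sub_nonneg_of_abs_le_one hone)
      (by exact_mod_cast mul_sub_nonneg_of_abs_le_one hone)
      (by exact_mod_cast mul_sub_nonneg_of_abs_le_one hε) h
    exact ⟨by exact_mod_cast h₀, by exact_mod_cast h₁, by exact_mod_cast h₂⟩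
  · rintro ⟨h₀, h₁, h₂⟩
    have := mul_nonpos_of_nonneg_of_nonpos hw₁.le (Int.cast_nonpos.2 h₀ : ((_ : ℤ) : ℝ) ≤ 0)
    have := mul_nonpos_of_nonneg_of_nonpos hw₂.le (Int.cast_nonpos.2 h₁ : ((_ : ℤ) : ℝ) ≤ 0)
    have := mul_nonpos_of_nonneg_of_nonpos hw₃.le (Int.cast_nonpos.2 h₂ : ((_ : ℤ) : ℝ) ≤ 0)
    unfold dicingExcess
    linarith

lemma nearestLatticePts_dicingCircumcenter {w₁ w₂ w₃ : ℝ} (hw₁ : 0 < w₁) (hw₂ : 0 < w₂)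
    (hw₃ : 0 < w₃) {ε : ℤ} (hε : |ε| ≤ 1) :
    nearestLatticePts (dicingForm w₁ w₂ w₃) (dicingCircumcenter w₁ w₂ w₃ ε) =
      latticeVec 2 '' intTriangle ε := by
  have hQ := dicingForm_latticeVec_sub_dicingCircumcenter (w₁ := w₁) (w₂ := w₂) (w₃ := w₃)
    (by positivity) ε
  have hnonpos := dicingExcess_nonpos_iff hw₁ hw₂ hw₃ hε
  ext x
  constructor
  · rintro ⟨hx, hmin⟩
    obtain ⟨y, rfl⟩ := mem_latticePts.1 hx
    have h := hmin _ (latticeVec_mem_latticePts 0)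
    rw [hQ, hQ] at h
    exact ⟨y, (hnonpos y).1 (by linarith [(hnonpos 0).2 (by simp [intTriangle])]), rfl⟩
  · rintro ⟨y, hy, rfl⟩
    refine ⟨latticeVec_mem_latticePts y, fun b hb => ?_⟩
    obtain ⟨z, rfl⟩ := mem_latticePts.1 hb
    rw [hQ, hQ]
    linarith [(hnonpos y).2 hy, dicingExcess_nonneg hw₁.le hw₂.le hw₃.le hε z]

lemma exists_eq_zTrans_triangleVerts_of_not_collinear {w₁ w₂ w₃ : ℝ} (hw₁ : 0 < w₁) (hw₂ : 0 < w₂)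
    (hw₃ : 0 < w₃) {α : Fin 2 → ℝ}
    (hα : ¬Collinear ℝ (nearestLatticePts (dicingForm w₁ w₂ w₃) α)) :
    ∃ v i, nearestLatticePts (dicingForm w₁ w₂ w₃) α = zTrans v (triangleVerts i) := by
  set N := nearestLatticePts (dicingForm w₁ w₂ w₃) α
  obtain ⟨v, ε, hε, hv⟩ := exists_forall_sub_mem_intTriangle (S := latticeVec 2 ⁻¹' N)
    fun a ha b hb => abs_le_one_of_forall_dicingForm_le hw₁ hw₂ hw₃ (a - b) fun e => by
      simpa only [map_sub] using
        apply_sub_le_of_mem_nearestLatticePts _ hb ha (latticeVec_mem_latticePts e)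
  obtain ⟨i, hi⟩ : ∃ i, latticeVec 2 '' intTriangle ε = triangleVerts i := by
    rcases hε with rfl | rfl
    exacts [⟨0, image_intTriangle_one⟩, ⟨1, image_intTriangle_neg_one⟩]
  have hsub : N ⊆ zTrans v (triangleVerts i) := by
    intro x hx
    obtain ⟨a, rfl⟩ := mem_latticePts.1 hx.1
    refine ⟨latticeVec 2 (a - v), hi ▸ mem_image_of_mem _ (hv a hx), ?_⟩
    change latticeVec 2 v + _ = _
    rw [map_sub, add_sub_cancel]
  refine ⟨v, i, ?_⟩
  rw [zTrans_triangleVerts] at hsub ⊢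
  exact eq_of_subset_triple_of_not_collinear hsub hα

lemma exists_nearestLatticePts_eq_zTrans_triangleVerts {w₁ w₂ w₃ : ℝ} (hw₁ : 0 < w₁) (hw₂ : 0 < w₂)
    (hw₃ : 0 < w₃) (v : Fin 2 → ℤ) (i : Fin 2) :
    ∃ α, nearestLatticePts (dicingForm w₁ w₂ w₃) α = zTrans v (triangleVerts i) := by
  obtain ⟨ε, hε, hi⟩ : ∃ ε : ℤ, |ε| ≤ 1 ∧ latticeVec 2 '' intTriangle ε = triangleVerts i := by
    fin_cases i
    exacts [⟨1, by norm_num, image_intTriangle_one⟩, ⟨-1, by norm_num, image_intTriangle_neg_one⟩]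
  refine ⟨latticeVec 2 v + dicingCircumcenter w₁ w₂ w₃ ε, ?_⟩
  rw [nearestLatticePts_add_latticeVec, nearestLatticePts_dicingCircumcenter hw₁ hw₂ hw₃ hε, hi]

theorem delaunayCell_dicingForm_iff {w₁ w₂ w₃ : ℝ} (hw₁ : 0 < w₁) (hw₂ : 0 < w₂) (hw₃ : 0 < w₃)
    (σ : Set (Fin 2 → ℝ)) :
    (∃ α, σ = convexHull ℝ (nearestLatticePts (dicingForm w₁ w₂ w₃) α)) ∧ affineSpan ℝ σ = ⊤ ↔
      ∃ v i, σ = zTrans v (convexHull ℝ (triangleVerts i)) := by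
  have hV : Module.finrank ℝ (Fin 2 → ℝ) = 2 := Module.finrank_fin_fun ℝ
  constructor
  · rintro ⟨⟨α, rfl⟩, hspan⟩
    rw [affineSpan_convexHull, affineSpan_eq_top_iff_not_collinear hV] at hspan
    obtain ⟨v, i, hN⟩ := exists_eq_zTrans_triangleVerts_of_not_collinear hw₁ hw₂ hw₃ hspan
    exact ⟨v, i, by rw [hN, convexHull_zTrans]⟩
  · rintro ⟨v, i, rfl⟩
    obtain ⟨α, hα⟩ := exists_nearestLatticePts_eq_zTrans_triangleVerts hw₁ hw₂ hw₃ v i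
    refine ⟨⟨α, by rw [hα, convexHull_zTrans]⟩, ?_⟩
    rw [← convexHull_zTrans, affineSpan_convexHull, affineSpan_eq_top_iff_not_collinear hV]
    exact not_collinear_zTrans_triangleVerts v i

/-- For `B = r₁·[[1,0],[0,1]] + r₂·[[0,0],[0,1]] + r₃·[[1,-1],[-1,1]]` with
`r₁, r₂, r₃ > 0`, the 2-dimensional Delaunay cells are exactly the `ℤ²`-translates of
`σ₁ = conv{0, s₁, s₁+s₂}` and `σ₂ = conv{0, s₂, s₁+s₂}`. -/
theorem delaunay_cells_V1_dim_two
    (r₁ r₂ r₃ : ℝ) (h₁ : 0 < r₁) (h₂ : 0 < r₂) (h₃ : 0 < r₃) :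
    ∀ σ : Set (Fin 2 → ℝ),
      (IsDelaunayCell
        (fun x y => x ⬝ᵥ
          ((r₁ • !![(1:ℝ), 0; 0, 1] + r₂ • !![(0:ℝ), 0; 0, 1]
            + r₃ • !![(1:ℝ), -1; -1, 1]).mulVec y)) σ ∧
        affineSpan ℝ σ = ⊤) ↔
      ∃ v : Fin 2 → ℤ,
        σ = zTrans v (convexHull ℝ
              {(0 : Fin 2 → ℝ), stdV 2 0, stdV 2 0 + stdV 2 1}) ∨
        σ = zTrans v (convexHull ℝ
              {(0 : Fin 2 → ℝ), stdV 2 1, stdV 2 0 + stdV 2 1}) := by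
  intro σ
  simp only [isDelaunayCell_iff, dotProduct_mulVec_eq_dicingForm]
  rw [delaunayCell_dicingForm_iff h₁ (by linarith) h₃]
  simp only [Fin.exists_fin_two]
  rfl
end
end

section
/- Let g = 4 and let B₀ be the positive definite symmetric bilinear form on ℝ⁴ associated to the quadratic form Σ_{i=1}^{4} r_i x_i² + Σ_{1 ≤ i < j ≤ 4, (i,j) ≠ (1,2)} r_{ij} (x_i − x_j)², where all r_i > 0 and all r_{ij} > 0 (i.e. B₀ lies in the relative interior of V₁ ∩ V₂). Then σ = conv{0, s₁, s₂, s₁+s₂, s₁+s₂+s₃, s₁+s₂+s₃+s₄} is a Delaunay cell of B₀, and σ = σ₁₂₃₄ ∪ σ₂₁₃₄, where σ_{abcd} = conv{0, s_a, s_a+s_b, s_a+s_b+s_c, s₁+s₂+s₃+s₄}. Similarly, conv{0, s₁, s₂, s₁+s₂, s₁+s₂+s₄, s₁+s₂+s₃+s₄} = σ₁₂₄₃ ∪ σ₂₁₄₃ is also a Delaunay cell of B₀. -/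
open Matrix Set

noncomputable section

/-- The rank-one symmetric matrix of the squared linear form `(c ⬝ x)²`. -/
def sqM (c : Fin 4 → ℝ) : Matrix (Fin 4) (Fin 4) ℝ := vecMulVec c c

/-- The matrix of `Σ rᵢ xᵢ² + Σ_{i<j, (i,j)≠(1,2)} r_{ij} (xᵢ-xⱼ)²`, i.e. a point of the
relative interior of `V₁ ∩ V₂`. -/
def MV1V2 (r₁ r₂ r₃ r₄ r₁₃ r₁₄ r₂₃ r₂₄ r₃₄ : ℝ) : Matrix (Fin 4) (Fin 4) ℝ :=
  r₁ • sqM (stdV 4 0) + r₂ • sqM (stdV 4 1) + r₃ • sqM (stdV 4 2) + r₄ • sqM (stdV 4 3)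
    + r₁₃ • sqM (stdV 4 0 - stdV 4 2) + r₁₄ • sqM (stdV 4 0 - stdV 4 3)
    + r₂₃ • sqM (stdV 4 1 - stdV 4 2) + r₂₄ • sqM (stdV 4 1 - stdV 4 3)
    + r₃₄ • sqM (stdV 4 2 - stdV 4 3)

/-- The simplex `σ_{abcd} = conv{0, s_a, s_a+s_b, s_a+s_b+s_c, s₁+s₂+s₃+s₄}`. -/
def sigma4 (a b c : Fin 4) : Set (Fin 4 → ℝ) :=
  convexHull ℝ
    {(0 : Fin 4 → ℝ), stdV 4 a, stdV 4 a + stdV 4 b, stdV 4 a + stdV 4 b + stdV 4 c,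
      stdV 4 0 + stdV 4 1 + stdV 4 2 + stdV 4 3}

/-! The quadratic form of `MV1V2` is a positive combination `∑ rₑ ℓₑ(x)²` of nine integral
linear forms `ℓₑ` (a dicing). Taking the centre `α` with `2 M α = ∑ rₑ ℓₑ`, the squared distance
from a lattice point `a` to `α` equals, up to a constant, `∑ rₑ tₑ (tₑ - 1)` with
`tₑ = ℓₑ(a) ∈ ℤ`. Each term is nonnegative and vanishes iff `tₑ ∈ {0, 1}`, so the lattice points
nearest to `α` are those on which every `ℓₑ` takes the value `0` or `1`. Orienting the form
`x₃ - x₄` one way or the other, these are exactly the six vertices of either cell.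

For the decomposition, the cell lies in the polytope `0 ≤ ℓₑ ≤ 1`, that is
`1 ≥ x₁, x₂ ≥ x₃ ≥ x₄ ≥ 0` (for the first cell), which is cut by `x₁ = x₂` into the two order
simplices `σ₁₂₃₄` and `σ₂₁₃₄`. -/

theorem zero_mem_latticePts (g : ℕ) : (0 : Fin g → ℝ) ∈ latticePts g :=
  ⟨0, funext fun _ => Int.cast_zero⟩

theorem add_mem_latticePts_s11 {g : ℕ} {a b : Fin g → ℝ} (ha : a ∈ latticePts g)
    (hb : b ∈ latticePts g) : a + b ∈ latticePts g := by
  obtain ⟨A, rfl⟩ := ha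
  obtain ⟨B, rfl⟩ := hb
  exact ⟨A + B, funext fun i => Int.cast_add (A i) (B i)⟩

theorem sub_mem_latticePts_s11 {g : ℕ} {a b : Fin g → ℝ} (ha : a ∈ latticePts g)
    (hb : b ∈ latticePts g) : a - b ∈ latticePts g := by
  obtain ⟨A, rfl⟩ := ha
  obtain ⟨B, rfl⟩ := hb
  exact ⟨A - B, funext fun i => Int.cast_sub (A i) (B i)⟩

theorem stdV_mem_latticePts (g : ℕ) (i : Fin g) : stdV g i ∈ latticePts g :=
  ⟨Pi.single i 1, by ext j; by_cases h : j = i <;> simp [stdV, h]⟩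

theorem dotProduct_mem_range_intCast {g : ℕ} {a b : Fin g → ℝ} (ha : a ∈ latticePts g)
    (hb : b ∈ latticePts g) : a ⬝ᵥ b ∈ Set.range ((↑) : ℤ → ℝ) := by
  obtain ⟨A, rfl⟩ := ha
  obtain ⟨B, rfl⟩ := hb
  exact ⟨A ⬝ᵥ B, by simp [dotProduct]⟩

theorem mul_sub_one_nonneg_of_mem_range_intCast {z : ℝ} (hz : z ∈ Set.range ((↑) : ℤ → ℝ)) :
    0 ≤ z * (z - 1) := by
  obtain ⟨m, rfl⟩ := hz
  rcases le_or_gt m 0 with hm | hm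
  · have : (m : ℝ) ≤ 0 := by exact_mod_cast hm
    nlinarith
  · have : (1 : ℝ) ≤ m := by exact_mod_cast hm
    nlinarith

theorem sum_mul_eq_zero_iff {ι : Type*} [Fintype ι] {r t : ι → ℝ} (hr : ∀ e, 0 < r e)
    (ht : ∀ e, 0 ≤ t e) : ∑ e, r e * t e = 0 ↔ ∀ e, t e = 0 := by
  rw [Finset.sum_eq_zero_iff_of_nonneg fun e _ => mul_nonneg (hr e).le (ht e)]
  simp [(hr _).ne']

theorem setOf_forall_le_eq_setOf_eq_zero {X : Type*} {L : Set X} {q F : X → ℝ} {c : ℝ}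
    (hq : ∀ a ∈ L, q a = F a + c) (hF : ∀ a ∈ L, 0 ≤ F a) (h0 : ∃ a ∈ L, F a = 0) :
    {a | a ∈ L ∧ ∀ b ∈ L, q a ≤ q b} = {a | a ∈ L ∧ F a = 0} := by
  obtain ⟨a₀, ha₀, hFa₀⟩ := h0
  ext a
  refine ⟨fun ⟨ha, hmin⟩ => ⟨ha, ?_⟩, fun ⟨ha, hFa⟩ => ⟨ha, fun b hb => ?_⟩⟩
  · have := hmin a₀ ha₀
    rw [hq a ha, hq a₀ ha₀, hFa₀] at this
    linarith [hF a ha]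
  · rw [hq a ha, hq b hb, hFa]
    linarith [hF b hb]

section Dicing

variable {n ι : Type*} [Fintype n] [Fintype ι]

def dicingMatrix (r : ι → ℝ) (ℓ : ι → n → ℝ) : Matrix n n ℝ :=
  ∑ e, r e • vecMulVec (ℓ e) (ℓ e)

theorem dotProduct_dicingMatrix_mulVec (r : ι → ℝ) (ℓ : ι → n → ℝ) (x y : n → ℝ) :
    x ⬝ᵥ dicingMatrix r ℓ *ᵥ y = ∑ e, r e * ((ℓ e ⬝ᵥ x) * (ℓ e ⬝ᵥ y)) := by
  simp only [dicingMatrix, sum_mulVec, smul_mulVec, vecMulVec_mulVec, dotProduct_sum,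
    dotProduct_smul, smul_eq_mul, op_smul_eq_mul]
  refine Finset.sum_congr rfl fun e _ => ?_
  rw [dotProduct_comm x]

theorem exists_dicingMatrix_mulVec_eq [DecidableEq n] {r : ι → ℝ} (hr : ∀ e, 0 < r e)
    {ℓ : ι → n → ℝ} (hℓ : ∀ x, (∀ e, ℓ e ⬝ᵥ x = 0) → x = 0) (w : n → ℝ) :
    ∃ α, dicingMatrix r ℓ *ᵥ α = w := by
  refine mulVec_surjective_iff_isUnit.2 (mulVec_injective_iff_isUnit.1 fun x y hxy => ?_) w
  have hz : dicingMatrix r ℓ *ᵥ (x - y) = 0 := by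
    rw [mulVec_sub, hxy, sub_self]
  have hq := congrArg ((x - y) ⬝ᵥ ·) hz
  simp only [dotProduct_dicingMatrix_mulVec, dotProduct_zero,
    sum_mul_eq_zero_iff hr fun e => mul_self_nonneg _, mul_self_eq_zero] at hq
  exact sub_eq_zero.1 (hℓ _ hq)

theorem sub_dotProduct_dicingMatrix_mulVec_sub {r : ι → ℝ} {ℓ : ι → n → ℝ} {α : n → ℝ}
    (hα : dicingMatrix r ℓ *ᵥ α = (1 / 2 : ℝ) • ∑ e, r e • ℓ e) (x : n → ℝ) :
    (x - α) ⬝ᵥ dicingMatrix r ℓ *ᵥ (x - α) =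
      ∑ e, r e * ((ℓ e ⬝ᵥ x) * (ℓ e ⬝ᵥ x - 1)) + α ⬝ᵥ dicingMatrix r ℓ *ᵥ α := by
  have hxα : x ⬝ᵥ dicingMatrix r ℓ *ᵥ α = (1 / 2) * ∑ e, r e * (ℓ e ⬝ᵥ x) := by
    rw [hα, dotProduct_comm, smul_dotProduct, sum_dotProduct]
    simp only [smul_dotProduct, smul_eq_mul]
  have hαx : α ⬝ᵥ dicingMatrix r ℓ *ᵥ x = x ⬝ᵥ dicingMatrix r ℓ *ᵥ α := by
    simp only [dotProduct_dicingMatrix_mulVec, mul_comm (ℓ _ ⬝ᵥ α)]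
  have hxx : x ⬝ᵥ dicingMatrix r ℓ *ᵥ x - ∑ e, r e * (ℓ e ⬝ᵥ x) =
      ∑ e, r e * ((ℓ e ⬝ᵥ x) * (ℓ e ⬝ᵥ x - 1)) := by
    rw [dotProduct_dicingMatrix_mulVec, ← Finset.sum_sub_distrib]
    exact Finset.sum_congr rfl fun e _ => by ring
  rw [mulVec_sub, dotProduct_sub, sub_dotProduct, sub_dotProduct, hαx, hxα, ← hxx]
  ring

end Dicing

theorem convexHull_subset_setOf_dotProduct_mem_Icc {n ι : Type*} [Fintype n] (ℓ : ι → n → ℝ)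
    {S : Set (n → ℝ)} (hS : ∀ a ∈ S, ∀ e, ℓ e ⬝ᵥ a = 0 ∨ ℓ e ⬝ᵥ a = 1) :
    convexHull ℝ S ⊆ {x | ∀ e, ℓ e ⬝ᵥ x ∈ Set.Icc 0 1} := by
  refine convexHull_min (fun a ha e => ?_) ?_
  · rcases hS a ha e with h | h <;> simp [h]
  · rw [Set.ofPred_forall]
    exact convex_iInter fun e => (convex_Icc 0 1).linear_preimage (dotProductBilin ℝ ℝ (ℓ e))

theorem isDelaunayCell_convexHull_dicing {g : ℕ} {ι : Type*} [Fintype ι] {r : ι → ℝ}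
    (hr : ∀ e, 0 < r e) {ℓ : ι → Fin g → ℝ} (hℓL : ∀ e, ℓ e ∈ latticePts g)
    (hℓ : ∀ x, (∀ e, ℓ e ⬝ᵥ x = 0) → x = 0) :
    IsDelaunayCell (fun x y => x ⬝ᵥ dicingMatrix r ℓ *ᵥ y)
      (convexHull ℝ {a | a ∈ latticePts g ∧ ∀ e, ℓ e ⬝ᵥ a = 0 ∨ ℓ e ⬝ᵥ a = 1}) := by
  obtain ⟨α, hα⟩ := exists_dicingMatrix_mulVec_eq hr hℓ ((1 / 2 : ℝ) • ∑ e, r e • ℓ e)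
  have hF : ∀ a ∈ latticePts g, ∀ e, 0 ≤ (ℓ e ⬝ᵥ a) * (ℓ e ⬝ᵥ a - 1) := fun a ha e =>
    mul_sub_one_nonneg_of_mem_range_intCast (dotProduct_mem_range_intCast (hℓL e) ha)
  refine ⟨α, ?_⟩
  rw [setOf_forall_le_eq_setOf_eq_zero
    (fun a _ => sub_dotProduct_dicingMatrix_mulVec_sub hα a)
    (fun a ha => Finset.sum_nonneg fun e _ => mul_nonneg (hr e).le (hF a ha e))
    ⟨0, zero_mem_latticePts g, by simp⟩]
  congr 1
  ext a
  refine and_congr_right fun ha => ?_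
  rw [sum_mul_eq_zero_iff hr (hF a ha)]
  simp only [mul_eq_zero, sub_eq_zero]

theorem add_add_add_mem_convexHull {E : Type*} [AddCommGroup E] [Module ℝ E] (v₁ v₂ v₃ v₄ : E)
    {t₁ t₂ t₃ t₄ : ℝ} (h₁ : t₁ ≤ 1) (h₂ : t₂ ≤ t₁) (h₃ : t₃ ≤ t₂) (h₄ : t₄ ≤ t₃) (h₀ : 0 ≤ t₄) :
    t₁ • v₁ + t₂ • v₂ + t₃ • v₃ + t₄ • v₄ ∈
      convexHull ℝ {0, v₁, v₁ + v₂, v₁ + v₂ + v₃, v₁ + v₂ + v₃ + v₄} := by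
  have := (convex_convexHull ℝ ({0, v₁, v₁ + v₂, v₁ + v₂ + v₃, v₁ + v₂ + v₃ + v₄} : Set E)).sum_mem
    (t := Finset.univ) (w := ![1 - t₁, t₁ - t₂, t₂ - t₃, t₃ - t₄, t₄])
    (z := ![0, v₁, v₁ + v₂, v₁ + v₂ + v₃, v₁ + v₂ + v₃ + v₄])
    (by intro i _; fin_cases i <;> simp <;> linarith) (by simp [Fin.sum_univ_five])
    (by intro i _; fin_cases i <;> exact subset_convexHull ℝ _ (by simp))
  convert this using 1
  simp [Fin.sum_univ_five]
  module

theorem mem_sigma4_of_le {a b c d : Fin 4}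
    (hsum : ∀ x : Fin 4 → ℝ, x a • stdV 4 a + x b • stdV 4 b + x c • stdV 4 c + x d • stdV 4 d = x)
    {x : Fin 4 → ℝ} (h₁ : x a ≤ 1) (h₂ : x b ≤ x a) (h₃ : x c ≤ x b) (h₄ : x d ≤ x c)
    (h₀ : 0 ≤ x d) : x ∈ sigma4 a b c := by
  have htop := hsum (stdV 4 0 + stdV 4 1 + stdV 4 2 + stdV 4 3)
  have hone : ∀ i, (stdV 4 0 + stdV 4 1 + stdV 4 2 + stdV 4 3) i = 1 := by
    intro i; fin_cases i <;> simp [stdV]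
  simp only [hone, one_smul] at htop
  rw [sigma4, ← htop, ← hsum x]
  exact add_add_add_mem_convexHull _ _ _ _ h₁ h₂ h₃ h₄ h₀

theorem fin_four_eq_iff {x y : Fin 4 → ℝ} :
    x = y ↔ x 0 = y 0 ∧ x 1 = y 1 ∧ x 2 = y 2 ∧ x 3 = y 3 :=
  ⟨by rintro rfl; simp, fun ⟨h0, h1, h2, h3⟩ => funext fun i => by fin_cases i <;> assumption⟩

theorem stdV_four_eq : stdV 4 0 = ![1, 0, 0, 0] ∧ stdV 4 1 = ![0, 1, 0, 0] ∧
    stdV 4 2 = ![0, 0, 1, 0] ∧ stdV 4 3 = ![0, 0, 0, 1] := by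
  refine ⟨?_, ?_, ?_, ?_⟩ <;> ext i <;> fin_cases i <;> rfl

def weightsV1V2 (r₁ r₂ r₃ r₄ r₁₃ r₁₄ r₂₃ r₂₄ r₃₄ : ℝ) : Fin 9 → ℝ :=
  ![r₁, r₂, r₃, r₄, r₁₃, r₁₄, r₂₃, r₂₄, r₃₄]

/-- The last form is `±(x₃ - x₄)`: its sign does not change the quadratic form, but it selects
which of the two cells the points where all forms take values in `{0, 1}` make up. -/
def formsV1V2 (c d : Fin 4) : Fin 9 → Fin 4 → ℝ :=
  ![stdV 4 0, stdV 4 1, stdV 4 2, stdV 4 3, stdV 4 0 - stdV 4 2, stdV 4 0 - stdV 4 3,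
    stdV 4 1 - stdV 4 2, stdV 4 1 - stdV 4 3, stdV 4 c - stdV 4 d]

def cellV1V2 (c : Fin 4) : Set (Fin 4 → ℝ) :=
  {0, stdV 4 0, stdV 4 1, stdV 4 0 + stdV 4 1, stdV 4 0 + stdV 4 1 + stdV 4 c,
    stdV 4 0 + stdV 4 1 + stdV 4 2 + stdV 4 3}

theorem formsV1V2_mem_latticePts (c d : Fin 4) (e : Fin 9) : formsV1V2 c d e ∈ latticePts 4 := by
  fin_cases e <;> simp only [formsV1V2] <;> simp <;>
    first
    | exact stdV_mem_latticePts _ _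
    | exact sub_mem_latticePts_s11 (stdV_mem_latticePts _ _) (stdV_mem_latticePts _ _)

theorem forall_formsV1V2_dotProduct (P : ℝ → Prop) (c d : Fin 4) (x : Fin 4 → ℝ) :
    (∀ e, P (formsV1V2 c d e ⬝ᵥ x)) ↔ P (x 0) ∧ P (x 1) ∧ P (x 2) ∧ P (x 3) ∧ P (x 0 - x 2) ∧
      P (x 0 - x 3) ∧ P (x 1 - x 2) ∧ P (x 1 - x 3) ∧ P (x c - x d) := by
  simp [Fin.forall_fin_succ, formsV1V2, stdV, sub_dotProduct]

theorem cellV1V2_subset_latticePts (c : Fin 4) : cellV1V2 c ⊆ latticePts 4 := by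
  have h := stdV_mem_latticePts 4
  rintro a (rfl | rfl | rfl | rfl | rfl | rfl)
  · exact zero_mem_latticePts 4
  all_goals repeat first | exact h _ | apply add_mem_latticePts_s11

section CellV1V2

variable {c d : Fin 4} (hcd : c = 2 ∧ d = 3 ∨ c = 3 ∧ d = 2)
include hcd

theorem MV1V2_eq_dicingMatrix (r₁ r₂ r₃ r₄ r₁₃ r₁₄ r₂₃ r₂₄ r₃₄ : ℝ) :
    MV1V2 r₁ r₂ r₃ r₄ r₁₃ r₁₄ r₂₃ r₂₄ r₃₄ =
      dicingMatrix (weightsV1V2 r₁ r₂ r₃ r₄ r₁₃ r₁₄ r₂₃ r₂₄ r₃₄) (formsV1V2 c d) := by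
  have h : sqM (stdV 4 2 - stdV 4 3) = vecMulVec (stdV 4 c - stdV 4 d) (stdV 4 c - stdV 4 d) := by
    rcases hcd with ⟨rfl, rfl⟩ | ⟨rfl, rfl⟩
    · rfl
    · rw [sqM, ← neg_sub, neg_vecMulVec, vecMulVec_neg, neg_neg]
  rw [MV1V2, h]
  simp [dicingMatrix, Fin.sum_univ_succ, weightsV1V2, formsV1V2, sqM, add_assoc]

theorem setOf_formsV1V2_eq_cellV1V2 :
    {a | a ∈ latticePts 4 ∧ ∀ e, formsV1V2 c d e ⬝ᵥ a = 0 ∨ formsV1V2 c d e ⬝ᵥ a = 1} =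
      cellV1V2 c := by
  ext a
  rw [Set.mem_ofPred_eq, forall_formsV1V2_dotProduct (fun t => t = 0 ∨ t = 1)]
  refine ⟨fun ⟨_, h0, h1, h2, h3, h⟩ => ?_, fun ha => ⟨cellV1V2_subset_latticePts c ha, ?_⟩⟩
  · obtain ⟨e0, e1, e2, e3⟩ := stdV_four_eq
    rcases hcd with ⟨rfl, rfl⟩ | ⟨rfl, rfl⟩ <;>
    simp only [cellV1V2, Set.mem_insert_iff, Set.mem_singleton_iff, fin_four_eq_iff, e0, e1, e2,
      e3, Pi.add_apply, Pi.zero_apply, cons_val] <;>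
    revert h <;>
    rcases h0 with h0 | h0 <;> rcases h1 with h1 | h1 <;> rcases h2 with h2 | h2 <;>
      rcases h3 with h3 | h3 <;> norm_num [h0, h1, h2, h3]
  · rcases hcd with ⟨rfl, rfl⟩ | ⟨rfl, rfl⟩ <;>
    rcases ha with rfl | rfl | rfl | rfl | rfl | rfl <;> simp [stdV]

theorem sum_smul_stdV_eq (x : Fin 4 → ℝ) :
    x 0 • stdV 4 0 + x 1 • stdV 4 1 + x c • stdV 4 c + x d • stdV 4 d = x := by
  rcases hcd with ⟨rfl, rfl⟩ | ⟨rfl, rfl⟩ <;> ext i <;> fin_cases i <;> simp [stdV]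

theorem convexHull_cellV1V2_eq_union :
    convexHull ℝ (cellV1V2 c) = sigma4 0 1 c ∪ sigma4 1 0 c := by
  refine subset_antisymm (fun x hx => ?_) (Set.union_subset ?_ ?_)
  · rw [← setOf_formsV1V2_eq_cellV1V2 hcd] at hx
    have hP := convexHull_subset_setOf_dotProduct_mem_Icc _ (fun a ha => ha.2) hx
    rw [Set.mem_ofPred_eq, forall_formsV1V2_dotProduct (· ∈ Set.Icc 0 1)] at hP
    simp only [Set.mem_Icc, sub_nonneg, tsub_le_iff_right] at hP
    obtain ⟨⟨-, h0⟩, ⟨-, h1⟩, ⟨h2, -⟩, ⟨h3, -⟩, ⟨h02, -⟩, ⟨h03, -⟩, ⟨h12, -⟩, ⟨h13, -⟩,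
      ⟨hdc, -⟩⟩ := hP
    obtain ⟨hc0, hc1, hd⟩ : x c ≤ x 0 ∧ x c ≤ x 1 ∧ 0 ≤ x d := by
      rcases hcd with ⟨rfl, rfl⟩ | ⟨rfl, rfl⟩ <;> exact ⟨‹_›, ‹_›, ‹_›⟩
    rcases le_total (x 1) (x 0) with h | h
    · exact Or.inl (mem_sigma4_of_le (sum_smul_stdV_eq hcd) h0 h hc1 hdc hd)
    · refine Or.inr (mem_sigma4_of_le (fun y => ?_) h1 h hc0 hdc hd)
      rw [add_comm (y 1 • _)]
      exact sum_smul_stdV_eq hcd y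
  all_goals
    refine convexHull_mono ?_
    rintro _ (rfl | rfl | rfl | rfl | rfl) <;> simp [cellV1V2, add_comm]

theorem isDelaunayCell_cellV1V2 {r₁ r₂ r₃ r₄ r₁₃ r₁₄ r₂₃ r₂₄ r₃₄ : ℝ}
    (hr : ∀ e, 0 < weightsV1V2 r₁ r₂ r₃ r₄ r₁₃ r₁₄ r₂₃ r₂₄ r₃₄ e) :
    IsDelaunayCell (fun x y => x ⬝ᵥ (MV1V2 r₁ r₂ r₃ r₄ r₁₃ r₁₄ r₂₃ r₂₄ r₃₄) *ᵥ y)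
      (convexHull ℝ (cellV1V2 c)) := by
  rw [MV1V2_eq_dicingMatrix hcd, ← setOf_formsV1V2_eq_cellV1V2 hcd]
  refine isDelaunayCell_convexHull_dicing hr (formsV1V2_mem_latticePts c d) fun x hx => ?_
  obtain ⟨h0, h1, h2, h3, -⟩ := (forall_formsV1V2_dotProduct (· = 0) c d x).1 hx
  exact fin_four_eq_iff.2 ⟨h0, h1, h2, h3⟩

end CellV1V2

/-- For `B₀` in the relative interior of `V₁ ∩ V₂`, the set
`conv{0, s₁, s₂, s₁+s₂, s₁+s₂+s₃, s₁+s₂+s₃+s₄}` is a Delaunay cell, equal to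
`σ₁₂₃₄ ∪ σ₂₁₃₄`; and similarly `conv{0, s₁, s₂, s₁+s₂, s₁+s₂+s₄, s₁+s₂+s₃+s₄}`
is a Delaunay cell, equal to `σ₁₂₄₃ ∪ σ₂₁₄₃`. -/
theorem delaunay_fusion_V1_V2
    (r₁ r₂ r₃ r₄ r₁₃ r₁₄ r₂₃ r₂₄ r₃₄ : ℝ)
    (h₁ : 0 < r₁) (h₂ : 0 < r₂) (h₃ : 0 < r₃) (h₄ : 0 < r₄)
    (h₁₃ : 0 < r₁₃) (h₁₄ : 0 < r₁₄)
    (h₂₃ : 0 < r₂₃) (h₂₄ : 0 < r₂₄) (h₃₄ : 0 < r₃₄) :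
    (IsDelaunayCell
      (fun x y => x ⬝ᵥ (MV1V2 r₁ r₂ r₃ r₄ r₁₃ r₁₄ r₂₃ r₂₄ r₃₄).mulVec y)
      (convexHull ℝ
        {(0 : Fin 4 → ℝ), stdV 4 0, stdV 4 1, stdV 4 0 + stdV 4 1,
          stdV 4 0 + stdV 4 1 + stdV 4 2,
          stdV 4 0 + stdV 4 1 + stdV 4 2 + stdV 4 3}) ∧
      convexHull ℝ
        {(0 : Fin 4 → ℝ), stdV 4 0, stdV 4 1, stdV 4 0 + stdV 4 1,
          stdV 4 0 + stdV 4 1 + stdV 4 2,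
          stdV 4 0 + stdV 4 1 + stdV 4 2 + stdV 4 3} =
        sigma4 0 1 2 ∪ sigma4 1 0 2) ∧
    (IsDelaunayCell
      (fun x y => x ⬝ᵥ (MV1V2 r₁ r₂ r₃ r₄ r₁₃ r₁₄ r₂₃ r₂₄ r₃₄).mulVec y)
      (convexHull ℝ
        {(0 : Fin 4 → ℝ), stdV 4 0, stdV 4 1, stdV 4 0 + stdV 4 1,
          stdV 4 0 + stdV 4 1 + stdV 4 3,
          stdV 4 0 + stdV 4 1 + stdV 4 2 + stdV 4 3}) ∧
      convexHull ℝ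
        {(0 : Fin 4 → ℝ), stdV 4 0, stdV 4 1, stdV 4 0 + stdV 4 1,
          stdV 4 0 + stdV 4 1 + stdV 4 3,
          stdV 4 0 + stdV 4 1 + stdV 4 2 + stdV 4 3} =
        sigma4 0 1 3 ∪ sigma4 1 0 3) := by
  have hr : ∀ e, 0 < weightsV1V2 r₁ r₂ r₃ r₄ r₁₃ r₁₄ r₂₃ r₂₄ r₃₄ e := by
    intro e; fin_cases e <;> assumption
  exact ⟨⟨isDelaunayCell_cellV1V2 (.inl ⟨rfl, rfl⟩) hr,
      convexHull_cellV1V2_eq_union (.inl ⟨rfl, rfl⟩)⟩,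
    ⟨isDelaunayCell_cellV1V2 (.inr ⟨rfl, rfl⟩) hr,
      convexHull_cellV1V2_eq_union (.inr ⟨rfl, rfl⟩)⟩⟩
end
end
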